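/- Let d ≥ 1, let f : ℝ^d → ℝ be a Schwartz function, let (ξ_x)_{x∈ℤ^d} be i.i.d. random vectors in ℝ^d, and let U be uniformly distributed on [−1/2, 1/2]^d, independent of (ξ_x)_{x∈ℤ^d}. Then for every k ∈ ℕ, both E[(Σ_{x∈ℤ^d} |f|(x + ξ_x + U))^k] < ∞ and E[(Σ_{x∈ℤ^d} |f|(x + ξ_x))^k] < ∞. -/

import Mathlib

open MeasureTheory ProbabilityTheory Filter Real Topology

noncomputable section

/-- The lattice point `x ∈ ℤ^d` viewed in `ℝ^d`. -/
def latticePt (d : ℕ) (x : Fin d → ℤ) : EuclideanSpace ℝ (Fin d) := WithLp.toLp 2 (fun i => (x i : ℝ))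

open scoped ENNReal

/-!
Since `f` decays faster than `∏ᵢ (1 + |yᵢ|)⁻²`, the lattice sum `∑ₓ |f|(x + w)` factors into
one-dimensional sums, each bounded uniformly in the shift; so it is bounded by a constant `B`
independent of `w`. The terms `aₓ = |f|(x + ξₓ + u)` are then independent, bounded by `B`, with
`∑ₓ E aₓ ≤ B`. Writing `T = aₓ + Sₓ` with `Sₓ` independent of `aₓ` gives
`E[T^(k+1)] = ∑ₓ E[aₓ T^k] ≤ 2^k (B^k + E[T^k]) ∑ₓ E aₓ`, so every moment of `T` is finite,
uniformly in the deterministic shift `u`; integrating over the independent `U` finishes.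
-/

theorem ENNReal.add_pow_le_two_pow_mul (p q : ℝ≥0∞) (k : ℕ) :
    (p + q) ^ k ≤ 2 ^ k * (p ^ k + q ^ k) := by
  calc (p + q) ^ k ≤ (2 * max p q) ^ k := by
        gcongr
        rw [two_mul]
        exact add_le_add (le_max_left p q) (le_max_right p q)
    _ = 2 ^ k * max p q ^ k := mul_pow _ _ _
    _ ≤ 2 ^ k * (p ^ k + q ^ k) := by
        gcongr
        rcases max_choice p q with h | h <;> rw [h]
        exacts [le_self_add, le_add_self]

section Moments

variable {ι Ω β : Type*} {mΩ : MeasurableSpace Ω} {mβ : MeasurableSpace β} {μ : Measure Ω}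
  {ξ : ι → Ω → β}

theorem ProbabilityTheory.iIndepFun.lintegral_comp_mul_eq (hξ : ∀ i, Measurable (ξ i))
    (hind : iIndepFun ξ μ) (i : ι) {g : β → ℝ≥0∞} (hg : Measurable g) {h : Ω → ℝ≥0∞}
    (hh : Measurable[⨆ j ∈ ({i}ᶜ : Set ι), mβ.comap (ξ j)] h) :
    ∫⁻ ω, g (ξ i ω) * h ω ∂μ = (∫⁻ ω, g (ξ i ω) ∂μ) * ∫⁻ ω, h ω ∂μ := by
  have h_le : ∀ j, mβ.comap (ξ j) ≤ mΩ := fun j => (hξ j).comap_le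
  have hindep : Indep (mβ.comap (ξ i)) (⨆ j ∈ ({i}ᶜ : Set ι), mβ.comap (ξ j)) μ := by
    simpa only [iSup_singleton] using indep_biSup_compl h_le hind {i}
  exact lintegral_mul_eq_lintegral_mul_lintegral_of_independent_measurableSpace
    (h_le i) (iSup₂_le fun j _ => h_le j) hindep (hg.comp (comap_measurable (ξ i))) hh

variable [Countable ι] {g : ι → β → ℝ≥0∞} {B : ℝ≥0∞}

theorem lintegral_tsum_pow_succ_le (hξ : ∀ i, Measurable (ξ i)) (hind : iIndepFun ξ μ)
    (hg : ∀ i, Measurable (g i)) (hB : ∀ i y, g i y ≤ B) (k : ℕ) :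
    ∫⁻ ω, (∑' i, g i (ξ i ω)) ^ (k + 1) ∂μ ≤
      2 ^ k * (B ^ k + ∫⁻ ω, (∑' i, g i (ξ i ω)) ^ k ∂μ) * ∑' i, ∫⁻ ω, g i (ξ i ω) ∂μ := by
  classical
  set T : Ω → ℝ≥0∞ := fun ω => ∑' i, g i (ξ i ω)
  -- `S i` omits the `i`-th term, hence is independent of `ξ i`.
  set S : ι → Ω → ℝ≥0∞ := fun i ω => ∑' j, if j = i then 0 else g j (ξ j ω)
  have hT_eq (i : ι) (ω : Ω) : T ω = g i (ξ i ω) + S i ω := ENNReal.tsum_eq_add_tsum_ite i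
  have hS_le (i : ι) (ω : Ω) : S i ω ≤ T ω := by
    rw [hT_eq i]; exact le_add_self
  have hS_meas (i : ι) : Measurable[⨆ j ∈ ({i}ᶜ : Set ι), mβ.comap (ξ j)] (S i) := by
    let _ : MeasurableSpace Ω := ⨆ j ∈ ({i}ᶜ : Set ι), mβ.comap (ξ j)
    refine Measurable.tsum fun j => ?_
    split_ifs with hj
    · exact measurable_const
    · exact (hg j).comp (comap_measurable (ξ j) |>.mono (le_iSup₂_of_le j hj le_rfl) le_rfl)
  have hterm (i : ι) :
      ∫⁻ ω, g i (ξ i ω) * T ω ^ k ∂μ ≤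
        2 ^ k * (B ^ k + ∫⁻ ω, T ω ^ k ∂μ) * ∫⁻ ω, g i (ξ i ω) ∂μ := by
    have hgξ : Measurable fun ω => g i (ξ i ω) := (hg i).comp (hξ i)
    calc ∫⁻ ω, g i (ξ i ω) * T ω ^ k ∂μ
        ≤ ∫⁻ ω, 2 ^ k * (B ^ k * g i (ξ i ω) + g i (ξ i ω) * S i ω ^ k) ∂μ := by
          refine lintegral_mono fun ω => ?_
          calc g i (ξ i ω) * T ω ^ k ≤ g i (ξ i ω) * (2 ^ k * (B ^ k + S i ω ^ k)) := by
                rw [hT_eq i]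
                gcongr
                exact (pow_le_pow_left' (add_le_add (hB i _) le_rfl) k).trans
                  (ENNReal.add_pow_le_two_pow_mul _ _ k)
            _ = 2 ^ k * (B ^ k * g i (ξ i ω) + g i (ξ i ω) * S i ω ^ k) := by ring
      _ = 2 ^ k * (B ^ k * ∫⁻ ω, g i (ξ i ω) ∂μ + ∫⁻ ω, g i (ξ i ω) * S i ω ^ k ∂μ) := by
          rw [lintegral_const_mul' _ _ (ENNReal.pow_ne_top ENNReal.ofNat_ne_top),
            lintegral_add_left (hgξ.const_mul _), lintegral_const_mul _ hgξ]
      _ = 2 ^ k * (B ^ k + ∫⁻ ω, S i ω ^ k ∂μ) * ∫⁻ ω, g i (ξ i ω) ∂μ := by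
          rw [hind.lintegral_comp_mul_eq hξ i (hg i) ((hS_meas i).pow_const k)]
          ring
      _ ≤ 2 ^ k * (B ^ k + ∫⁻ ω, T ω ^ k ∂μ) * ∫⁻ ω, g i (ξ i ω) ∂μ := by
          gcongr with ω
          exact hS_le i ω
  calc ∫⁻ ω, T ω ^ (k + 1) ∂μ = ∑' i, ∫⁻ ω, g i (ξ i ω) * T ω ^ k ∂μ := by
        rw [← lintegral_tsum]
        · simp only [pow_succ', T, ENNReal.tsum_mul_right]
        · have hT : Measurable T := Measurable.tsum fun j => (hg j).comp (hξ j)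
          exact fun i => (((hg i).comp (hξ i)).mul (hT.pow_const k)).aemeasurable
    _ ≤ ∑' i, 2 ^ k * (B ^ k + ∫⁻ ω, T ω ^ k ∂μ) * ∫⁻ ω, g i (ξ i ω) ∂μ :=
        ENNReal.tsum_le_tsum hterm
    _ = _ := ENNReal.tsum_mul_left

def momentBound (B M : ℝ≥0∞) : ℕ → ℝ≥0∞
  | 0 => 1
  | k + 1 => 2 ^ k * (B ^ k + momentBound B M k) * M

theorem momentBound_ne_top {B M : ℝ≥0∞} (hB : B ≠ ⊤) (hM : M ≠ ⊤) (k : ℕ) :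
    momentBound B M k ≠ ⊤ := by
  induction k with
  | zero => exact ENNReal.one_ne_top
  | succ k ih =>
    exact ENNReal.mul_ne_top (ENNReal.mul_ne_top (ENNReal.pow_ne_top ENNReal.ofNat_ne_top)
      (ENNReal.add_ne_top.2 ⟨ENNReal.pow_ne_top hB, ih⟩)) hM

theorem lintegral_tsum_pow_le_momentBound [IsProbabilityMeasure μ] (hξ : ∀ i, Measurable (ξ i))
    (hind : iIndepFun ξ μ) (hg : ∀ i, Measurable (g i)) (hB : ∀ i y, g i y ≤ B) {M : ℝ≥0∞}
    (hM : ∑' i, ∫⁻ ω, g i (ξ i ω) ∂μ ≤ M) (k : ℕ) :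
    ∫⁻ ω, (∑' i, g i (ξ i ω)) ^ k ∂μ ≤ momentBound B M k := by
  induction k with
  | zero => simp [momentBound]
  | succ k ih =>
    calc _ ≤ _ := lintegral_tsum_pow_succ_le hξ hind hg hB k
      _ ≤ momentBound B M (k + 1) := by rw [momentBound]; gcongr

end Moments

theorem ENNReal.tsum_fin_pi_prod {α : Type*} :
    ∀ {d : ℕ} (c : Fin d → α → ℝ≥0∞), ∑' x : Fin d → α, ∏ i, c i (x i) = ∏ i, ∑' a, c i a
  | 0, c => by simp
  | d + 1, c => by
    rw [← (Fin.consEquiv fun _ => α).tsum_eq, ENNReal.tsum_prod', Fin.prod_univ_succ]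
    simp only [Fin.consEquiv_apply, Fin.prod_univ_succ, Fin.cons_zero, Fin.cons_succ,
      ENNReal.tsum_mul_left, ENNReal.tsum_mul_right, ENNReal.tsum_fin_pi_prod]

def decayWeight (r : ℝ) : ℝ := ((1 + |r|) ^ 2)⁻¹

theorem decayWeight_nonneg (r : ℝ) : 0 ≤ decayWeight r := by
  unfold decayWeight; positivity

theorem decayWeight_add_le (r : ℝ) {t : ℝ} (ht : |t| ≤ 1) :
    decayWeight (r + t) ≤ 4 * decayWeight r := by
  have h : 1 + |r| ≤ 2 * (1 + |r + t|) := by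
    have := abs_sub (r + t) t
    rw [add_sub_cancel_right] at this
    linarith [abs_nonneg (r + t)]
  unfold decayWeight
  rw [← div_eq_mul_inv, le_div_iff₀ (by positivity), mul_comm, ← div_eq_mul_inv,
    div_le_iff₀ (by positivity)]
  nlinarith [abs_nonneg r]

theorem summable_decayWeight_int : Summable fun n : ℤ => decayWeight n := by
  have h : Summable fun n : ℕ => decayWeight n := by
    have := (summable_nat_add_iff 1).2 (Real.summable_nat_pow_inv.2 one_lt_two)
    refine this.congr fun n => ?_
    simp [decayWeight, add_comm]
  exact Summable.of_nat_of_neg (by simpa using h) (by simpa [decayWeight] using h)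

theorem tsum_decayWeight_ne_top : ∑' n : ℤ, ENNReal.ofReal (decayWeight n) ≠ ⊤ := by
  rw [← ENNReal.ofReal_tsum_of_nonneg (f := fun n : ℤ => decayWeight n)
    (fun n => decayWeight_nonneg n) summable_decayWeight_int]
  exact ENNReal.ofReal_ne_top

theorem tsum_decayWeight_add_le (s : ℝ) :
    ∑' n : ℤ, ENNReal.ofReal (decayWeight (n + s)) ≤
      4 * ∑' n : ℤ, ENNReal.ofReal (decayWeight n) := by
  have hfract : |Int.fract s| ≤ 1 := by
    rw [abs_of_nonneg (Int.fract_nonneg s)]; exact (Int.fract_lt_one s).le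
  calc ∑' n : ℤ, ENNReal.ofReal (decayWeight (n + s))
      ≤ ∑' n : ℤ, 4 * ENNReal.ofReal (decayWeight (n + ⌊s⌋)) := by
        refine ENNReal.tsum_le_tsum fun n => ?_
        rw [← ENNReal.ofReal_ofNat 4, ← ENNReal.ofReal_mul (by norm_num)]
        refine ENNReal.ofReal_le_ofReal ?_
        simpa only [add_assoc, Int.floor_add_fract] using decayWeight_add_le (n + ⌊s⌋) hfract
    _ = 4 * ∑' n : ℤ, ENNReal.ofReal (decayWeight n) := by
        rw [ENNReal.tsum_mul_left,
          ← (Equiv.addRight ⌊s⌋).tsum_eq fun n : ℤ => ENNReal.ofReal (decayWeight n)]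
        simp only [Equiv.coe_addRight, Int.cast_add]

theorem SchwartzMap.exists_norm_le_mul_prod_decayWeight {ι F : Type*} [Fintype ι]
    [NormedAddCommGroup F] [NormedSpace ℝ F] (f : SchwartzMap (EuclideanSpace ℝ ι) F) :
    ∃ D, ∀ y, ‖f y‖ ≤ D * ∏ i, decayWeight (y i) := by
  set n := Fintype.card ι
  refine ⟨2 ^ (2 * n) * (Finset.Iic (2 * n, 0)).sup (schwartzSeminormFamily ℝ _ _) f, fun y => ?_⟩
  have hdecay :=
    SchwartzMap.one_add_le_sup_seminorm_apply (𝕜 := ℝ) (m := (2 * n, 0)) le_rfl le_rfl f y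
  rw [norm_iteratedFDeriv_zero] at hdecay
  have hprod : ∏ i, (1 + |y i|) ^ 2 ≤ (1 + ‖y‖) ^ (2 * n) := by
    calc ∏ i, (1 + |y i|) ^ 2 ≤ ∏ _i : ι, (1 + ‖y‖) ^ 2 := by
          gcongr with i
          exact PiLp.norm_apply_le y i
      _ = (1 + ‖y‖) ^ (2 * n) := by rw [Finset.prod_const, Finset.card_univ, ← pow_mul]
  have hinv : (∏ i, (1 + |y i|) ^ 2) * ∏ i, decayWeight (y i) = 1 := by
    rw [← Finset.prod_mul_distrib]
    exact Finset.prod_eq_one fun i _ => mul_inv_cancel₀ (by positivity)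
  calc ‖f y‖ = (∏ i, (1 + |y i|) ^ 2) * ‖f y‖ * ∏ i, decayWeight (y i) := by
        rw [mul_comm _ ‖f y‖, mul_assoc, hinv, mul_one]
    _ ≤ (1 + ‖y‖) ^ (2 * n) * ‖f y‖ * ∏ i, decayWeight (y i) := by
        gcongr
        exact Finset.prod_nonneg fun i _ => decayWeight_nonneg _
    _ ≤ _ := mul_le_mul_of_nonneg_right hdecay
        (Finset.prod_nonneg fun i _ => decayWeight_nonneg _)

theorem SchwartzMap.exists_tsum_nnnorm_latticePt_add_le {d : ℕ} {F : Type*}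
    [NormedAddCommGroup F] [NormedSpace ℝ F] (f : SchwartzMap (EuclideanSpace ℝ (Fin d)) F) :
    ∃ B ≠ ⊤, ∀ w, ∑' x : Fin d → ℤ, (‖f (latticePt d x + w)‖₊ : ℝ≥0∞) ≤ B := by
  obtain ⟨D, hD⟩ := f.exists_norm_le_mul_prod_decayWeight
  set Z := ∑' n : ℤ, ENNReal.ofReal (decayWeight n)
  refine ⟨ENNReal.ofReal D * (4 * Z) ^ d,
    ENNReal.mul_ne_top ENNReal.ofReal_ne_top (ENNReal.pow_ne_top
      (ENNReal.mul_ne_top ENNReal.ofNat_ne_top tsum_decayWeight_ne_top)), fun w => ?_⟩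
  calc ∑' x : Fin d → ℤ, (‖f (latticePt d x + w)‖₊ : ℝ≥0∞)
      ≤ ∑' x : Fin d → ℤ, ENNReal.ofReal D * ∏ i, ENNReal.ofReal (decayWeight (x i + w i)) := by
        refine ENNReal.tsum_le_tsum fun x => ?_
        rw [← enorm_eq_nnnorm, ← ofReal_norm,
          ← ENNReal.ofReal_prod_of_nonneg fun i _ => decayWeight_nonneg _,
          ← ENNReal.ofReal_mul' (Finset.prod_nonneg fun i _ => decayWeight_nonneg _)]
        exact ENNReal.ofReal_le_ofReal (hD _)
    _ = ENNReal.ofReal D * ∏ i, ∑' n : ℤ, ENNReal.ofReal (decayWeight (n + w i)) := by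
        rw [ENNReal.tsum_mul_left,
          ENNReal.tsum_fin_pi_prod fun i (n : ℤ) => ENNReal.ofReal (decayWeight (n + w i))]
    _ ≤ ENNReal.ofReal D * ∏ _i : Fin d, 4 * Z := by
        gcongr with i
        exact tsum_decayWeight_add_le _
    _ = ENNReal.ofReal D * (4 * Z) ^ d := by rw [Finset.prod_const, Finset.card_fin]

theorem exists_lintegral_tsum_nnnorm_latticePt_pow_le {Ω F : Type*} [MeasurableSpace Ω]
    {μ : Measure Ω} [IsProbabilityMeasure μ] [NormedAddCommGroup F] [NormedSpace ℝ F] {d : ℕ}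
    (f : SchwartzMap (EuclideanSpace ℝ (Fin d)) F) (ξ : (Fin d → ℤ) → Ω → EuclideanSpace ℝ (Fin d))
    (hmeas : ∀ x, Measurable (ξ x)) (hindep : iIndepFun ξ μ)
    (hident : ∀ x, IdentDistrib (ξ x) (ξ 0) μ μ) (k : ℕ) :
    ∃ C ≠ ⊤, ∀ u, ∫⁻ ω, (∑' x, (‖f (latticePt d x + ξ x ω + u)‖₊ : ℝ≥0∞)) ^ k ∂μ ≤ C := by
  obtain ⟨B, hB, hBw⟩ := f.exists_tsum_nnnorm_latticePt_add_le
  refine ⟨momentBound B B k, momentBound_ne_top hB hB k, fun u => ?_⟩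
  set g : (Fin d → ℤ) → EuclideanSpace ℝ (Fin d) → ℝ≥0∞ :=
    fun x v => ‖f (latticePt d x + v + u)‖₊
  have hg (x : Fin d → ℤ) : Measurable (g x) := by fun_prop
  have hsum_le (v : EuclideanSpace ℝ (Fin d)) : ∑' x, g x v ≤ B := by
    simpa only [g, add_assoc] using hBw (v + u)
  have hgB (x : Fin d → ℤ) (v : EuclideanSpace ℝ (Fin d)) : g x v ≤ B :=
    (ENNReal.le_tsum x).trans (hsum_le v)
  have hM : ∑' x, ∫⁻ ω, g x (ξ x ω) ∂μ ≤ B :=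
    calc ∑' x, ∫⁻ ω, g x (ξ x ω) ∂μ = ∑' x, ∫⁻ ω, g x (ξ 0 ω) ∂μ :=
          tsum_congr fun x => ((hident x).comp (hg x)).lintegral_eq
      _ = ∫⁻ ω, ∑' x, g x (ξ 0 ω) ∂μ :=
          (lintegral_tsum fun x => ((hg x).comp (hmeas 0)).aemeasurable).symm
      _ ≤ ∫⁻ _, B ∂μ := lintegral_mono fun ω => hsum_le _
      _ = B := by simp
  exact lintegral_tsum_pow_le_momentBound hmeas hindep hg hgB hM k

theorem ProbabilityTheory.IndepFun.lintegral_comp_le {Ω α β : Type*} {mΩ : MeasurableSpace Ω}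
    [MeasurableSpace α] [MeasurableSpace β] {μ : Measure Ω} [IsProbabilityMeasure μ]
    {X : Ω → α} {Y : Ω → β} (hX : Measurable X) (hY : Measurable Y) (hXY : IndepFun X Y μ)
    {H : α → β → ℝ≥0∞} (hH : Measurable (Function.uncurry H)) {C : ℝ≥0∞}
    (hC : ∀ y, ∫⁻ ω, H (X ω) y ∂μ ≤ C) :
    ∫⁻ ω, H (X ω) (Y ω) ∂μ ≤ C := by
  have hmap : μ.map (fun ω => (X ω, Y ω)) = (μ.map X).prod (μ.map Y) :=
    (indepFun_iff_map_prod_eq_prod_map_map hX.aemeasurable hY.aemeasurable).mp hXY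
  have : IsProbabilityMeasure (μ.map Y) := Measure.isProbabilityMeasure_map hY.aemeasurable
  calc ∫⁻ ω, H (X ω) (Y ω) ∂μ = ∫⁻ p, Function.uncurry H p ∂(μ.map X).prod (μ.map Y) := by
        rw [← hmap, lintegral_map hH (hX.prodMk hY)]
        rfl
    _ = ∫⁻ y, ∫⁻ x, H x y ∂μ.map X ∂μ.map Y := lintegral_prod_symm _ hH.aemeasurable
    _ ≤ ∫⁻ _, C ∂μ.map Y := by
        refine lintegral_mono fun y => ?_
        exact (lintegral_map hH.of_uncurry_right hX).trans_le (hC y)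
    _ = C := by simp

theorem statement15
    {Ω : Type*} [MeasureSpace Ω] [IsProbabilityMeasure (ℙ : Measure Ω)]
    (d : ℕ)
    (f : SchwartzMap (EuclideanSpace ℝ (Fin d)) ℝ)
    (ξ : (Fin d → ℤ) → Ω → EuclideanSpace ℝ (Fin d))
    (hmeas : ∀ x, Measurable (ξ x))
    (hindep : iIndepFun ξ ℙ)
    (hident : ∀ x, IdentDistrib (ξ x) (ξ 0) ℙ ℙ)
    (U : Ω → EuclideanSpace ℝ (Fin d)) (hU : Measurable U)
    -- `U` is independent of the family `(ξ_x)`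
    (hUindep : IndepFun (fun ω => fun x => ξ x ω) U ℙ)
    (k : ℕ) :
    (∫⁻ ω, (∑' x : Fin d → ℤ,
        (‖f (latticePt d x + ξ x ω + U ω)‖₊ : ENNReal)) ^ k ∂ℙ < ⊤) ∧
    (∫⁻ ω, (∑' x : Fin d → ℤ,
        (‖f (latticePt d x + ξ x ω)‖₊ : ENNReal)) ^ k ∂ℙ < ⊤) := by
  obtain ⟨C, hC, hbound⟩ := exists_lintegral_tsum_nnnorm_latticePt_pow_le f ξ hmeas hindep hident k
  constructor
  · refine (hUindep.lintegral_comp_le (measurable_pi_lambda _ hmeas) hU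
      (H := fun Ξ u => (∑' x, (‖f (latticePt d x + Ξ x + u)‖₊ : ℝ≥0∞)) ^ k) ?_ hbound).trans_lt
      hC.lt_top
    fun_prop
  · simpa only [add_zero] using (hbound 0).trans_lt hC.lt_top
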